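/- arXiv:1706.03880 — 6 statements merged into one kernel-verified Lean document; each statement's English description precedes it below -/
import Mathlib

section
/- Let n be a geometric random variable with P(n = m) = (1-p_0)^m p_0 for m ≥ 0, and conditional on n, let Y be binomial with n trials and success probability q. If q(1-p_0) = v p_0 for some v ≥ 0, then E[e^{θY}] = 1/(1 - v(e^θ - 1)) for all θ < log((1+v)/v); in particular Y is distributed as a geometric random variable with mean v. -/
/-- Let `n ~ Geometric(p₀)` on `{0,1,2,...}` and, conditionally on `n`, `Y ~ Binomial(n,q)`,
where `q (1 - p₀) = v p₀` for some `v ≥ 0`. Then `E[e^{θY}] = 1/(1 - v (e^θ - 1))` for all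
`θ < log((1+v)/v)`; in particular `Y` is geometric with mean `v`, i.e.
`P(Y = k) = (v/(1+v))^k · 1/(1+v)`. -/
theorem geometric_binomial_compound_mgf (p₀ q v : ℝ)
    (hp₀ : 0 < p₀) (hp₀1 : p₀ ≤ 1) (hq0 : 0 ≤ q) (hq1 : q ≤ 1) (hv : 0 ≤ v)
    (hrel : q * (1 - p₀) = v * p₀) :
    (∀ θ : ℝ, θ < Real.log ((1 + v) / v) →
        ∑' n : ℕ, ((1 - p₀) ^ n * p₀) * (q * Real.exp θ + (1 - q)) ^ n
          = 1 / (1 - v * (Real.exp θ - 1))) ∧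
      (∀ k : ℕ,
        ∑' n : ℕ, ((1 - p₀) ^ n * p₀) * ((n.choose k : ℝ) * q ^ k * (1 - q) ^ (n - k))
          = (v / (1 + v)) ^ k * (1 / (1 + v))) := by
  set r : ℝ := 1 - p₀ with hr
  have hr0 : 0 ≤ r := by simp [hr]; linarith
  have hr1 : r < 1 := by simp [hr]; linarith
  constructor
  · intro θ hθ
    have hexp : 0 < Real.exp θ := Real.exp_pos θ
    have hlt : v * (Real.exp θ - 1) < 1 := by
      rcases eq_or_lt_of_le hv with h0 | h0
      · simp [← h0]
      · have hpos : 0 < (1 + v) / v := by positivity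
        have h1 := Real.exp_lt_exp.mpr hθ
        rw [Real.exp_log hpos] at h1
        have h2 : Real.exp θ * v < 1 + v := (lt_div_iff₀ h0).mp h1
        nlinarith
    set x : ℝ := q * Real.exp θ + (1 - q) with hx
    have hx0 : 0 ≤ x := by
      have := mul_nonneg hq0 hexp.le
      simp only [hx]; linarith
    have hrx : r * x = r + v * p₀ * (Real.exp θ - 1) := by
      simp only [hx]
      linear_combination (Real.exp θ - 1) * hrel
    have hrx0 : 0 ≤ r * x := mul_nonneg hr0 hx0
    have key : 1 - r * x = p₀ * (1 - v * (Real.exp θ - 1)) := by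
      rw [hrx, hr]; ring
    have hrx1 : r * x < 1 := by nlinarith
    have := tsum_geometric_of_lt_one hrx0 hrx1
    calc ∑' n : ℕ, (r ^ n * p₀) * x ^ n
        = ∑' n : ℕ, (r * x) ^ n * p₀ := by
          apply tsum_congr; intro n; rw [mul_pow]; ring
      _ = (∑' n : ℕ, (r * x) ^ n) * p₀ := tsum_mul_right
      _ = (1 - r * x)⁻¹ * p₀ := by rw [this]
      _ = 1 / (1 - v * (Real.exp θ - 1)) := by
          rw [key, mul_inv, mul_comm, ← mul_assoc, mul_inv_cancel₀ hp₀.ne', one_mul, one_div]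
  · intro k
    set s : ℝ := r * (1 - q) with hs
    have hs0 : 0 ≤ s := mul_nonneg hr0 (by linarith)
    have hs1 : s < 1 := lt_of_le_of_lt (by nlinarith : s ≤ r) hr1
    have hnorm : ‖s‖ < 1 := by rwa [Real.norm_eq_abs, abs_of_nonneg hs0]
    have H := hasSum_choose_mul_geometric_of_norm_lt_one (𝕜 := ℝ) k hnorm
    have H2 := H.mul_left (p₀ * q ^ k * r ^ k)
    set f : ℕ → ℝ := fun n => (r ^ n * p₀) * ((n.choose k : ℝ) * q ^ k * (1 - q) ^ (n - k))
      with hf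
    have hshift : ∀ n : ℕ, f (n + k) =
        p₀ * q ^ k * r ^ k * (((n + k).choose k : ℝ) * s ^ n) := by
      intro n
      simp only [hf, hs]
      rw [Nat.add_sub_cancel, pow_add, mul_pow]
      ring
    have H3 : HasSum (fun n => f (n + k))
        (p₀ * q ^ k * r ^ k * (1 / (1 - s) ^ (k + 1))) := by
      rw [funext hshift]; exact H2
    have hzero : ∀ i ∈ Finset.range k, f i = 0 := by
      intro i hi
      have : i.choose k = 0 := Nat.choose_eq_zero_of_lt (Finset.mem_range.mp hi)
      simp [hf, this]
    have H4 : HasSum f (p₀ * q ^ k * r ^ k * (1 / (1 - s) ^ (k + 1))) := by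
      have heq : ∑ i ∈ Finset.range k, f i = 0 := Finset.sum_eq_zero hzero
      exact (hasSum_nat_add_iff' k).mp (by rw [heq, sub_zero]; exact H3)
    have h1s : 1 - s = p₀ * (1 + v) := by
      simp only [hs, hr]
      have hrel' : q * (1 - p₀) = v * p₀ := by rw [← hr]; exact hrel
      linear_combination hrel'
    have hqr : q * r = v * p₀ := hrel
    have h1v : 0 < 1 + v := by linarith
    have hqrk : q ^ k * r ^ k = (v * p₀) ^ k := by rw [← mul_pow, hqr]
    have hval : p₀ * q ^ k * r ^ k * (1 / (1 - s) ^ (k + 1))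
        = (v / (1 + v)) ^ k * (1 / (1 + v)) := by
      rw [h1s, mul_assoc p₀ (q ^ k) (r ^ k), hqrk, mul_pow, mul_pow, div_pow]
      field_simp [hp₀.ne', h1v.ne']
      ring
    rw [H4.tsum_eq, hval]
end

section
/- Lipschitz-type bound on MNL revenue: if 0 ≤ v_i ≤ u_i for all i ∈ S and r_i ∈ [0,1], then R(S, u) − R(S, v) ≤ (∑_{j∈S}(u_j − v_j)) / (1 + ∑_{j∈S} v_j). -/
/-- Lipschitz-type bound on the MNL expected revenue: if `0 ≤ vᵢ ≤ uᵢ` and `rᵢ ∈ [0,1]`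
for all `i ∈ S`, then `R(S,u) − R(S,v) ≤ (∑_{j∈S} (uⱼ − vⱼ)) / (1 + ∑_{j∈S} vⱼ)`. -/
theorem mnl_revenue_lipschitz {ι : Type*} (S : Finset ι) (r v u : ι → ℝ)
    (hr0 : ∀ i ∈ S, 0 ≤ r i) (hr1 : ∀ i ∈ S, r i ≤ 1)
    (hv0 : ∀ i ∈ S, 0 ≤ v i) (hvu : ∀ i ∈ S, v i ≤ u i) :
    (∑ i ∈ S, r i * u i) / (1 + ∑ j ∈ S, u j)
      - (∑ i ∈ S, r i * v i) / (1 + ∑ j ∈ S, v j)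
      ≤ (∑ j ∈ S, (u j - v j)) / (1 + ∑ j ∈ S, v j) := by
  have hu0 : ∀ i ∈ S, 0 ≤ u i := fun i hi => (hv0 i hi).trans (hvu i hi)
  have hsv : (0:ℝ) ≤ ∑ j ∈ S, v j := Finset.sum_nonneg hv0
  have hsu : (0:ℝ) ≤ ∑ j ∈ S, u j := Finset.sum_nonneg hu0
  have hD : (0:ℝ) < 1 + ∑ j ∈ S, v j := by linarith
  have hB : (0:ℝ) < 1 + ∑ j ∈ S, u j := by linarith
  have hDB : 1 + ∑ j ∈ S, v j ≤ 1 + ∑ j ∈ S, u j := by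
    have := Finset.sum_le_sum hvu
    linarith
  have hA : (0:ℝ) ≤ ∑ i ∈ S, r i * u i :=
    Finset.sum_nonneg fun i hi => mul_nonneg (hr0 i hi) (hu0 i hi)
  have h1 : (∑ i ∈ S, r i * u i) / (1 + ∑ j ∈ S, u j)
      ≤ (∑ i ∈ S, r i * u i) / (1 + ∑ j ∈ S, v j) :=
    div_le_div_of_nonneg_left hA hD hDB |>.trans_eq rfl
  have h2 : (∑ i ∈ S, r i * u i) - (∑ i ∈ S, r i * v i) ≤ ∑ j ∈ S, (u j - v j) := by
    rw [← Finset.sum_sub_distrib]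
    refine Finset.sum_le_sum fun i hi => ?_
    have := hr1 i hi; have := hr0 i hi; have := hvu i hi; have := hv0 i hi
    nlinarith
  have h3 : ((∑ i ∈ S, r i * u i) - (∑ i ∈ S, r i * v i)) / (1 + ∑ j ∈ S, v j)
      ≤ (∑ j ∈ S, (u j - v j)) / (1 + ∑ j ∈ S, v j) :=
    div_le_div_of_nonneg_right h2 hD.le |>.trans_eq rfl
  calc (∑ i ∈ S, r i * u i) / (1 + ∑ j ∈ S, u j)
      - (∑ i ∈ S, r i * v i) / (1 + ∑ j ∈ S, v j)
      ≤ (∑ i ∈ S, r i * u i) / (1 + ∑ j ∈ S, v j)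
        - (∑ i ∈ S, r i * v i) / (1 + ∑ j ∈ S, v j) := by linarith
    _ = ((∑ i ∈ S, r i * u i) - (∑ i ∈ S, r i * v i)) / (1 + ∑ j ∈ S, v j) := by ring
    _ ≤ _ := h3
end

section
/- KL divergence bound for MNL choice distributions: fix a nonempty assortment S ⊆ {1,...,N} with 1 ∈ S, and ε ∈ (0,1). Let P₀ be the distribution on {0,1,...,N} with P₀(0) = 2/(2+|S|), P₀(i) = 1/(2+|S|) for i ∈ S, and 0 otherwise; let P₁ be the distribution with P₁(0) = 2/(2+|S|+2ε), P₁(i) = 1/(2+|S|+2ε) for i ∈ S\{1}, P₁(1) = (1+2ε)/(2+|S|+2ε), and 0 otherwise. Then KL(P₀‖P₁) ≤ 4ε². -/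
/-! Since `log x ≤ x - 1`, the Kullback–Leibler divergence is bounded by the χ²-divergence
`∑ⱼ P₀(j)²/P₁(j) - 1`. For these two MNL distributions, with `c = 2 + |S|`, the latter equals
`4ε²(c - 1) / ((1 + 2ε) c²)`, which is at most `4ε²`. -/

open Real Finset

lemma mul_log_div_le_sq_div_sub {p q : ℝ} (hp : 0 ≤ p) (hq : 0 < q) :
    p * log (p / q) ≤ p ^ 2 / q - p := by
  rcases hp.eq_or_lt with rfl | hp
  · simp
  calc p * log (p / q) ≤ p * (p / q - 1) :=
        mul_le_mul_of_nonneg_left (log_le_sub_one_of_pos (by positivity)) hp.le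
    _ = p ^ 2 / q - p := by ring

lemma sum_mul_log_div_le_sum_sq_div_sub {ι : Type*} (s : Finset ι) {p q : ι → ℝ}
    (hp : ∀ j ∈ s, 0 ≤ p j) (hq : ∀ j ∈ s, 0 < q j) :
    ∑ j ∈ s, p j * log (p j / q j) ≤ ∑ j ∈ s, (p j ^ 2 / q j - p j) :=
  sum_le_sum fun j hj => mul_log_div_le_sq_div_sub (hp j hj) (hq j hj)

lemma sum_insert_eq_of_eqOn_erase {ι : Type*} [DecidableEq ι] {s : Finset ι} {a b : ι}
    {f : ι → ℝ} {c : ℝ} (ha : a ∉ s) (hb : b ∈ s) (hf : ∀ j ∈ s, j ≠ b → f j = c) :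
    ∑ j ∈ insert a s, f j = f a + f b + ((#s : ℝ) - 1) * c := by
  have hcard : ((#(s.erase b) : ℕ) : ℝ) = #s - 1 := by
    rw [card_erase_of_mem hb, Nat.cast_pred (card_pos.mpr ⟨b, hb⟩)]
  have hconst : ∑ j ∈ s.erase b, f j = ((#s : ℝ) - 1) * c := by
    rw [sum_congr rfl fun j hj => hf j (mem_of_mem_erase hj) (ne_of_mem_erase hj),
      sum_const, nsmul_eq_mul, hcard]
  rw [sum_insert ha, ← add_sum_erase s f hb, hconst, add_assoc]

lemma mnl_chiSq_eq {K ε : ℝ} (hK : 0 ≤ K) (hε : 0 ≤ ε) :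
    (2 / (2 + K)) ^ 2 / (2 / (2 + K + 2 * ε)) - 2 / (2 + K)
      + ((1 / (2 + K)) ^ 2 / ((1 + 2 * ε) / (2 + K + 2 * ε)) - 1 / (2 + K))
      + (K - 1) * ((1 / (2 + K)) ^ 2 / (1 / (2 + K + 2 * ε)) - 1 / (2 + K))
    = 4 * ε ^ 2 * (1 + K) / ((1 + 2 * ε) * (2 + K) ^ 2) := by
  have : 0 < 2 + K + 2 * ε := by linarith
  have : 0 < 1 + 2 * ε := by linarith
  have : 0 < 2 + K := by linarith
  field_simp
  ring

lemma mnl_chiSq_le {K ε : ℝ} (hK : 0 ≤ K) (hε : 0 ≤ ε) :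
    4 * ε ^ 2 * (1 + K) / ((1 + 2 * ε) * (2 + K) ^ 2) ≤ 4 * ε ^ 2 := by
  have hden : 1 + K ≤ (1 + 2 * ε) * (2 + K) ^ 2 := by nlinarith
  rw [div_le_iff₀ (by positivity)]
  exact mul_le_mul_of_nonneg_left hden (by positivity)

theorem mnl_choice_kl_bound_general (N : ℕ) (S : Finset ℕ) (hSsub : S ⊆ Finset.Icc 1 N)
    (h1S : (1 : ℕ) ∈ S) (ε : ℝ) (hε0 : 0 < ε)
    (P₀ P₁ : ℕ → ℝ)
    (hP₀ : ∀ j, P₀ j = if j = 0 then 2 / (2 + (S.card : ℝ))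
      else if j ∈ S then 1 / (2 + (S.card : ℝ)) else 0)
    (hP₁ : ∀ j, P₁ j = if j = 0 then 2 / (2 + (S.card : ℝ) + 2 * ε)
      else if j = 1 then (1 + 2 * ε) / (2 + (S.card : ℝ) + 2 * ε)
      else if j ∈ S then 1 / (2 + (S.card : ℝ) + 2 * ε) else 0) :
    ∑ j ∈ insert 0 S, P₀ j * Real.log (P₀ j / P₁ j) ≤ 4 * ε ^ 2 := by
  have h0S : 0 ∉ S := fun h => by simpa using hSsub h
  have hne0 : ∀ j ∈ S, j ≠ 0 := fun j hj h => h0S (h ▸ hj)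
  have hK : (0 : ℝ) ≤ #S := Nat.cast_nonneg _
  have hP₀_nonneg : ∀ j ∈ insert 0 S, 0 ≤ P₀ j := fun j _ => by
    rw [hP₀]; split_ifs <;> positivity
  have hP₁_pos : ∀ j ∈ insert 0 S, 0 < P₁ j := fun j hj => by
    rw [hP₁]
    split_ifs with h0 h1 hS
    any_goals positivity
    exact absurd (mem_insert.mp hj) (by tauto)
  calc ∑ j ∈ insert 0 S, P₀ j * log (P₀ j / P₁ j)
      ≤ ∑ j ∈ insert 0 S, (P₀ j ^ 2 / P₁ j - P₀ j) :=
        sum_mul_log_div_le_sum_sq_div_sub _ hP₀_nonneg hP₁_pos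
    _ = 4 * ε ^ 2 * (1 + #S) / ((1 + 2 * ε) * (2 + #S) ^ 2) := by
        rw [sum_insert_eq_of_eqOn_erase h0S h1S
          (c := (1 / (2 + (#S : ℝ))) ^ 2 / (1 / (2 + #S + 2 * ε)) - 1 / (2 + #S))
          fun j hj hj1 => by simp [hP₀, hP₁, hne0 j hj, hj1, hj]]
        simpa [hP₀, hP₁, h1S] using mnl_chiSq_eq hK hε0.le
    _ ≤ 4 * ε ^ 2 := mnl_chiSq_le hK hε0.le

/-- KL divergence bound for the MNL choice distributions in the lower-bound instance:
let `S ⊆ {1,…,N}` with `1 ∈ S`, and `ε ∈ (0,1)`.  `P₀` gives probability `2/(2+|S|)` to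
the no-purchase outcome `0` and `1/(2+|S|)` to each `i ∈ S`; `P₁` gives `2/(2+|S|+2ε)`
to `0`, `(1+2ε)/(2+|S|+2ε)` to product `1`, and `1/(2+|S|+2ε)` to each other `i ∈ S`.
Then `KL(P₀‖P₁) = ∑_j P₀(j) log(P₀(j)/P₁(j)) ≤ 4ε²`. -/
theorem mnl_choice_kl_bound (N : ℕ) (S : Finset ℕ) (hSsub : S ⊆ Finset.Icc 1 N)
    (h1S : (1 : ℕ) ∈ S) (ε : ℝ) (hε0 : 0 < ε) (hε1 : ε < 1)
    (P₀ P₁ : ℕ → ℝ)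
    (hP₀ : ∀ j, P₀ j = if j = 0 then 2 / (2 + (S.card : ℝ))
      else if j ∈ S then 1 / (2 + (S.card : ℝ)) else 0)
    (hP₁ : ∀ j, P₁ j = if j = 0 then 2 / (2 + (S.card : ℝ) + 2 * ε)
      else if j = 1 then (1 + 2 * ε) / (2 + (S.card : ℝ) + 2 * ε)
      else if j ∈ S then 1 / (2 + (S.card : ℝ) + 2 * ε) else 0) :
    ∑ j ∈ insert 0 S, P₀ j * Real.log (P₀ j / P₁ j) ≤ 4 * ε ^ 2 :=
  mnl_choice_kl_bound_general N S hSsub h1S ε hε0 P₀ P₁ hP₀ hP₁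
end

section
/- Multiplicative Chernoff bound for geometric variables (small mean, upper tail): let X₁,...,X_n be i.i.d. geometric random variables on {0,1,2,...} with mean μ ∈ (0,1]. Then for any δ > 0, P((1/n)∑ X_i > (1+δ)μ) ≤ exp(−nμδ²/(2(1+δ)(1+μ)²)). -/
/-!
Chernoff's method, carried out with outer measures only: the `Xᵢ` are not assumed measurable, so
instead of integrating `T ^ ∑ Xᵢ` we cover the event by the cells `{X = m}`, `m : Fin n → ℕ`.
By independence a cell has probability `∏ (1 - p) ^ mᵢ p`, and on the event the weight
`T ^ (∑ mᵢ - n α)`, `α = (1 + δ) μ`, is at least `1` for every `T ≥ 1`. Summing the weighted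
cells bounds the probability by `(T ^ (-α) p / (1 - (1 - p) T)) ^ n`. The tilt
`T = (1 + δ)(1 + μ) / (1 + α)` makes the mean of the tilted geometric law equal to `α`; the
resulting factor is bounded using `log (1 + y) ≥ 2y / (y + 2)` and `1 + z ≤ exp z`.
-/

open ProbabilityTheory MeasureTheory
open scoped ENNReal

theorem ENNReal.tsum_pi_prod {β : Type*} :
    ∀ {n : ℕ} (f : Fin n → β → ℝ≥0∞), ∑' m : Fin n → β, ∏ i, f i (m i) = ∏ i, ∑' b, f i b
  | 0, f => by
    rw [tsum_eq_single (fun i => i.elim0) fun m hm => absurd (Subsingleton.elim m _) hm]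
    simp
  | n + 1, f => by
    rw [← (Fin.consEquiv fun _ => β).tsum_eq, ENNReal.tsum_prod', Fin.prod_univ_succ]
    simp only [Fin.consEquiv_apply, Fin.prod_univ_succ, Fin.cons_zero, Fin.cons_succ,
      ENNReal.tsum_mul_left, ENNReal.tsum_mul_right]
    rw [ENNReal.tsum_pi_prod]

theorem ProbabilityTheory.iIndepFun.measure_lt_sum_le {Ω : Type*} [MeasurableSpace Ω]
    {P : Measure Ω} {n : ℕ} {X : Fin n → Ω → ℕ} (hX : iIndepFun X P) {T : ℝ} (hT : 1 ≤ T)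
    (a : ℝ) :
    P {ω | a < ∑ i, (X i ω : ℝ)}
      ≤ ENNReal.ofReal (T ^ (-a)) * ∏ i, ∑' k : ℕ, ENNReal.ofReal (T ^ k) * P {ω | X i ω = k} := by
  set E := {ω | a < ∑ i, (X i ω : ℝ)}
  let cell : (Fin n → ℕ) → Set Ω := fun m => ⋂ i, X i ⁻¹' {m i}
  have hcover : E ⊆ ⋃ m, cell m ∩ E :=
    fun ω hω => Set.mem_iUnion.2 ⟨fun i => X i ω, Set.mem_iInter.2 fun _ => rfl, hω⟩
  have hcell : ∀ m, P (cell m ∩ E)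
      ≤ ENNReal.ofReal (T ^ (-a)) * ∏ i, ENNReal.ofReal (T ^ m i) * P {ω | X i ω = m i} := by
    intro m
    by_cases hm : a < ∑ i, (m i : ℝ)
    · have hweight : 1 ≤ ENNReal.ofReal (T ^ (-a)) * ∏ i, ENNReal.ofReal (T ^ m i) := by
        rw [← ENNReal.ofReal_prod_of_nonneg fun i _ => by positivity,
          ← ENNReal.ofReal_mul (by positivity), ← ENNReal.ofReal_one]
        refine ENNReal.ofReal_le_ofReal ?_
        rw [Finset.prod_pow_eq_pow_sum, ← Real.rpow_natCast, ← Real.rpow_add (by linarith)]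
        exact Real.one_le_rpow hT (by push_cast; linarith)
      calc P (cell m ∩ E)
          ≤ P (cell m) := measure_mono Set.inter_subset_left
        _ = ∏ i, P {ω | X i ω = m i} :=
          hX.meas_iInter fun i => ⟨{m i}, measurableSet_singleton _, rfl⟩
        _ ≤ _ := by
          rw [Finset.prod_mul_distrib, ← mul_assoc]
          exact le_mul_of_one_le_left zero_le hweight
    · have hempty : cell m ∩ E = ∅ := by
        refine Set.eq_empty_of_forall_notMem ?_
        rintro ω ⟨hω, hlt : a < ∑ i, (X i ω : ℝ)⟩
        have hXm : ∀ i, X i ω = m i := fun i => Set.mem_iInter.1 hω i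
        simp only [hXm] at hlt
        exact hm hlt
      simp [hempty]
  calc P E
      ≤ ∑' m, P (cell m ∩ E) := (measure_mono hcover).trans (measure_iUnion_le _)
    _ ≤ ∑' m : Fin n → ℕ,
          ENNReal.ofReal (T ^ (-a)) * ∏ i, ENNReal.ofReal (T ^ m i) * P {ω | X i ω = m i} :=
      ENNReal.tsum_le_tsum hcell
    _ = _ := by
      rw [ENNReal.tsum_mul_left,
        ENNReal.tsum_pi_prod fun i k => ENNReal.ofReal (T ^ k) * P {ω | X i ω = k}]

theorem tsum_ofReal_pow_mul_measure_eq_of_geometric {Ω : Type*} [MeasurableSpace Ω]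
    {P : Measure Ω} {Y : Ω → ℕ} {p T : ℝ} (hp0 : 0 ≤ p) (hp1 : p ≤ 1) (hT : 0 ≤ T)
    (hpT : (1 - p) * T < 1) (hY : ∀ m, P {ω | Y ω = m} = ENNReal.ofReal ((1 - p) ^ m * p)) :
    ∑' k : ℕ, ENNReal.ofReal (T ^ k) * P {ω | Y ω = k}
      = ENNReal.ofReal (p / (1 - (1 - p) * T)) := by
  have hq : 0 ≤ (1 - p) * T := mul_nonneg (by linarith) hT
  calc ∑' k : ℕ, ENNReal.ofReal (T ^ k) * P {ω | Y ω = k}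
      = ∑' k : ℕ, ENNReal.ofReal (((1 - p) * T) ^ k * p) := by
        refine tsum_congr fun k => ?_
        rw [hY, ← ENNReal.ofReal_mul (by positivity), mul_pow]
        congr 1
        ring
    _ = ENNReal.ofReal (∑' k : ℕ, ((1 - p) * T) ^ k * p) :=
        (ENNReal.ofReal_tsum_of_nonneg (fun k => by positivity)
          ((summable_geometric_of_lt_one hq hpT).mul_right p)).symm
    _ = ENNReal.ofReal (p / (1 - (1 - p) * T)) := by
        rw [tsum_mul_right, tsum_geometric_of_lt_one hq hpT, inv_mul_eq_div]

theorem tsum_tilt_pow_mul_measure_eq_of_geometric {Ω : Type*} [MeasurableSpace Ω]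
    {P : Measure Ω} {Y : Ω → ℕ} {p μ x : ℝ} (hp0 : 0 < p) (hp1 : p ≤ 1) (hμ : μ = (1 - p) / p)
    (hx : 0 ≤ x) (hY : ∀ m, P {ω | Y ω = m} = ENNReal.ofReal ((1 - p) ^ m * p)) :
    ∑' k : ℕ, ENNReal.ofReal (((1 + x) * (1 + μ) / (1 + (1 + x) * μ)) ^ k) * P {ω | Y ω = k}
      = ENNReal.ofReal ((1 + (1 + x) * μ) / (1 + μ)) := by
  have hμ0 : 0 ≤ μ := hμ ▸ div_nonneg (by linarith) hp0.le
  have hp : p = 1 / (1 + μ) := by rw [hμ]; field_simp; ring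
  have hqT : (1 - p) * ((1 + x) * (1 + μ) / (1 + (1 + x) * μ))
      = (1 + x) * μ / (1 + (1 + x) * μ) := by
    rw [hp]; field_simp; ring
  rw [tsum_ofReal_pow_mul_measure_eq_of_geometric hp0.le hp1 (by positivity)
    (by rw [hqT, div_lt_one (by positivity)]; linarith) hY, hqT, hp]
  congr 1
  field_simp
  ring

theorem geometric_chernoff_factor_le {μ x : ℝ} (hμ : 0 ≤ μ) (hx : 0 ≤ x) :
    ((1 + x) * (1 + μ) / (1 + (1 + x) * μ)) ^ (-((1 + x) * μ)) * ((1 + (1 + x) * μ) / (1 + μ))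
      ≤ Real.exp (-(μ * x ^ 2 / (2 * (1 + x) * (1 + μ) ^ 2))) := by
  set α := (1 + x) * μ
  have hα : 0 ≤ α := by positivity
  have hT : (1 + x) * (1 + μ) / (1 + α) = 1 + x / (1 + α) := by
    field_simp; ring
  have hlog := Real.le_log_one_add_of_nonneg (x := x / (1 + α)) (by positivity)
  have hratio : (1 + α) / (1 + μ) ≤ Real.exp (x * μ / (1 + μ)) := by
    convert Real.add_one_le_exp (x * μ / (1 + μ)) using 1
    field_simp; ring
  rw [hT, Real.rpow_def_of_pos (by positivity)]
  calc Real.exp (Real.log (1 + x / (1 + α)) * -α) * ((1 + α) / (1 + μ))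
      ≤ Real.exp (2 * (x / (1 + α)) / (x / (1 + α) + 2) * -α) * Real.exp (x * μ / (1 + μ)) := by
        refine mul_le_mul (Real.exp_le_exp.2 ?_) hratio (by positivity) (by positivity)
        exact mul_le_mul_of_nonpos_right hlog (neg_nonpos.2 hα)
    _ = Real.exp (-(μ * x ^ 2 / ((x + 2 + 2 * α) * (1 + μ)))) := by
        rw [← Real.exp_add]
        congr 1
        field_simp
        ring
    _ ≤ Real.exp (-(μ * x ^ 2 / (2 * (1 + x) * (1 + μ) ^ 2))) := by
        have hden : x + 2 + 2 * α ≤ 2 * (1 + x) * (1 + μ) := by simp only [α]; linarith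
        rw [Real.exp_le_exp, neg_le_neg_iff]
        refine div_le_div_of_nonneg_left (by positivity) (by positivity) ?_
        calc (x + 2 + 2 * α) * (1 + μ) ≤ 2 * (1 + x) * (1 + μ) * (1 + μ) := by gcongr
          _ = 2 * (1 + x) * (1 + μ) ^ 2 := by ring

theorem geometric_chernoff_upper_small_mean_general {Ω : Type*} [MeasurableSpace Ω]
    (P : Measure Ω) [IsProbabilityMeasure P] (n : ℕ) (hn : 0 < n)
    (X : Fin n → Ω → ℕ) (p : ℝ) (hp : p ∈ Set.Ioo (0 : ℝ) 1)
    (hindep : iIndepFun X P)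
    (hdist : ∀ i m, P {ω | X i ω = m} = ENNReal.ofReal ((1 - p) ^ m * p))
    (μ : ℝ) (hμ : μ = (1 - p) / p) (hμ0 : 0 < μ) (δ : ℝ) (hδ : 0 < δ) :
    P {ω | (∑ i, (X i ω : ℝ)) / n > (1 + δ) * μ}
      ≤ ENNReal.ofReal
          (Real.exp (-(n * μ * δ ^ 2) / (2 * (1 + δ) * (1 + μ) ^ 2))) := by
  obtain ⟨hp0, hp1⟩ := hp
  set α := (1 + δ) * μ
  set T := (1 + δ) * (1 + μ) / (1 + α)
  have hT : 1 ≤ T := by rw [le_div_iff₀ (by positivity)]; nlinarith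
  have hpgf : ∀ i, ∑' k : ℕ, ENNReal.ofReal (T ^ k) * P {ω | X i ω = k}
      = ENNReal.ofReal ((1 + α) / (1 + μ)) := fun i =>
    tsum_tilt_pow_mul_measure_eq_of_geometric hp0 hp1.le hμ hδ.le (hdist i)
  have hevent : {ω | (∑ i, (X i ω : ℝ)) / n > α} ⊆ {ω | α * n < ∑ i, (X i ω : ℝ)} :=
    fun ω hω => (lt_div_iff₀ (by positivity : (0 : ℝ) < n)).1 hω
  calc P {ω | (∑ i, (X i ω : ℝ)) / n > α}
      ≤ P {ω | α * n < ∑ i, (X i ω : ℝ)} := measure_mono hevent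
    _ ≤ ENNReal.ofReal (T ^ (-(α * n)))
          * ∏ i, ∑' k : ℕ, ENNReal.ofReal (T ^ k) * P {ω | X i ω = k} :=
        hindep.measure_lt_sum_le hT _
    _ = ENNReal.ofReal ((T ^ (-α) * ((1 + α) / (1 + μ))) ^ n) := by
        rw [Finset.prod_congr rfl fun i _ => hpgf i, Finset.prod_const, Finset.card_fin,
          ← ENNReal.ofReal_pow (by positivity : (0 : ℝ) ≤ (1 + α) / (1 + μ)),
          ← ENNReal.ofReal_mul (by positivity), mul_pow,
          ← Real.rpow_natCast (T ^ (-α)), ← Real.rpow_mul (by positivity), neg_mul]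
    _ ≤ ENNReal.ofReal (Real.exp (-(μ * δ ^ 2 / (2 * (1 + δ) * (1 + μ) ^ 2))) ^ n) :=
        ENNReal.ofReal_le_ofReal
          (pow_le_pow_left₀ (by positivity) (geometric_chernoff_factor_le hμ0.le hδ.le) n)
    _ = _ := by
        rw [← Real.exp_nat_mul]
        ring_nf

/-- Multiplicative Chernoff bound for geometric random variables (small mean, upper
tail): if `X₁,…,Xₙ` are i.i.d. geometric on `{0,1,2,...}` with mean `μ = (1−p)/p ≤ 1`,
then for any `δ > 0`, `P((1/n)∑Xᵢ > (1+δ)μ) ≤ exp(−nμδ²/(2(1+δ)(1+μ)²))`. -/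
theorem geometric_chernoff_upper_small_mean {Ω : Type*} [MeasurableSpace Ω]
    (P : Measure Ω) [IsProbabilityMeasure P] (n : ℕ) (hn : 0 < n)
    (X : Fin n → Ω → ℕ) (p : ℝ) (hp : p ∈ Set.Ioo (0 : ℝ) 1)
    (hindep : iIndepFun X P)
    (hdist : ∀ i m, P {ω | X i ω = m} = ENNReal.ofReal ((1 - p) ^ m * p))
    (μ : ℝ) (hμ : μ = (1 - p) / p) (hμ0 : 0 < μ) (hμ1 : μ ≤ 1) (δ : ℝ) (hδ : 0 < δ) :
    P {ω | (∑ i, (X i ω : ℝ)) / n > (1 + δ) * μ}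
      ≤ ENNReal.ofReal
          (Real.exp (-(n * μ * δ ^ 2) / (2 * (1 + δ) * (1 + μ) ^ 2))) :=
  geometric_chernoff_upper_small_mean_general P n hn X p hp hindep hdist μ hμ hμ0 δ hδ
end

section
/- Multiplicative Chernoff bound for geometric variables (lower tail, small mean): let X₁,...,X_n be i.i.d. geometric random variables on {0,1,2,...} with mean μ ∈ (0,1]. Then for any δ ∈ (0,1), P((1/n)∑ X_i < (1−δ)μ) ≤ exp(−(nδ²μ/(6(1+μ)²))·(3 − 2δμ/(1+μ))). -/
/-!
Chernoff's method by exponential tilting. By independence, `P {∑ Xᵢ < a}` is at most the sum of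
`∏ P {Xᵢ = mᵢ}` over the integer points `m` with `∑ mᵢ < a`; on these points `1 ≤ e^{θ (a - ∑ mᵢ)}`
for `θ ≥ 0`, so the sum is at most `e^{θ a} (p / (1 - (1 - p) e^{-θ}))ⁿ`. The choice
`e^{-θ} = (1 - δ) / (1 - v)` with `v = δ μ / (1 + μ)` turns the bound into `e^{n E}`, where `E` is
minus the Kullback–Leibler divergence between the geometric laws of means `(1 - δ) μ` and `μ`, and
the third-order Taylor bounds for `-log (1 - x)` give the stated estimate for `E`.
-/

open ProbabilityTheory MeasureTheory Real Finset

theorem Real.neg_log_one_sub_sub_cubic_mem_Icc {x : ℝ} (h0 : 0 ≤ x) (h1 : x < 1) :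
    -log (1 - x) - (x + x ^ 2 / 2 + x ^ 3 / 3) ∈ Set.Icc 0 (x ^ 4 / (4 * (1 - x))) := by
  have htail := (hasSum_nat_add_iff' 3).2 (hasSum_pow_div_log_of_abs_lt_one (x := x)
    (by rwa [abs_of_nonneg h0]))
  simp only [sum_range_succ, sum_range_zero] at htail
  norm_num at htail
  have hgeom := (hasSum_geometric_of_lt_one h0 h1).mul_left (x ^ 4 / 4)
  refine ⟨htail.nonneg fun n => by positivity, ?_⟩
  rw [div_mul_eq_div_mul_one_div, one_div]
  refine hasSum_le (fun n => ?_) htail hgeom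
  rw [div_mul_eq_mul_div, ← pow_add, add_comm 4 n]
  gcongr
  linarith [n.cast_nonneg (α := ℝ)]

theorem geometric_lower_tail_exponent_taylor_le {δ μ : ℝ} (hδ0 : 0 < δ) (hμ0 : 0 < μ)
    (hμ1 : μ ≤ 1) :
    μ * ((1 - δ) * (δ + δ ^ 2 / 2 + δ ^ 3 / 3) + δ ^ 4 / 4)
      - (1 + (1 - δ) * μ) * (δ * μ / (1 + μ) + (δ * μ / (1 + μ)) ^ 2 / 2
        + (δ * μ / (1 + μ)) ^ 3 / 3)
    ≤ -(δ ^ 2 * μ / (6 * (1 + μ) ^ 2)) * (3 - 2 * δ * μ / (1 + μ)) := by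
  have hμ2 : 0 ≤ 2 - μ ^ 2 := by nlinarith
  rw [← sub_nonneg]
  have hnum : -(δ ^ 2 * μ / (6 * (1 + μ) ^ 2)) * (3 - 2 * δ * μ / (1 + μ))
      - (μ * ((1 - δ) * (δ + δ ^ 2 / 2 + δ ^ 3 / 3) + δ ^ 4 / 4)
        - (1 + (1 - δ) * μ) * (δ * μ / (1 + μ) + (δ * μ / (1 + μ)) ^ 2 / 2
          + (δ * μ / (1 + μ)) ^ 3 / 3))
      = δ ^ 2 * μ * (6 * μ + 12 * μ ^ 2 + 6 * μ ^ 3 + 2 * δ + 12 * δ * μ + 14 * δ * μ ^ 2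
          + 4 * δ * μ ^ 3 + δ ^ 2 + 4 * δ ^ 2 * μ + 3 * δ ^ 2 * μ ^ 2 * (2 - μ ^ 2))
        / (12 * (1 + μ) ^ 4) := by
    field_simp
    ring
  rw [hnum]
  positivity

-- The left-hand side is minus the Kullback–Leibler divergence between the geometric laws of
-- means `(1 - δ) μ` and `μ`.
theorem geometric_lower_tail_exponent_le {δ μ : ℝ} (hδ0 : 0 < δ) (hδ1 : δ < 1) (hμ0 : 0 < μ)
    (hμ1 : μ ≤ 1) :
    -((1 - δ) * μ) * log (1 - δ) + (1 + (1 - δ) * μ) * log (1 - δ * μ / (1 + μ))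
      ≤ -(δ ^ 2 * μ / (6 * (1 + μ) ^ 2)) * (3 - 2 * δ * μ / (1 + μ)) := by
  set v := δ * μ / (1 + μ)
  have hv0 : 0 ≤ v := by positivity
  have hv1 : v < 1 := by
    rw [div_lt_one (by positivity)]
    nlinarith
  have hδ := (neg_log_one_sub_sub_cubic_mem_Icc hδ0.le hδ1).2
  have hv := (neg_log_one_sub_sub_cubic_mem_Icc hv0 hv1).1
  have hδ4 : (1 - δ) * μ * (δ ^ 4 / (4 * (1 - δ))) = μ * (δ ^ 4 / 4) := by
    field_simp [(sub_pos.2 hδ1).ne']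
  have hν : 0 ≤ 1 + (1 - δ) * μ := by nlinarith
  linarith [geometric_lower_tail_exponent_taylor_le hδ0 hμ0 hμ1,
    mul_le_mul_of_nonneg_left hδ (by nlinarith : 0 ≤ (1 - δ) * μ), mul_nonneg hν hv]

section

variable {Ω ι : Type*} [MeasurableSpace Ω] {P : Measure Ω} [Fintype ι] [DecidableEq ι]

theorem ProbabilityTheory.iIndepFun.measure_sum_lt_le_sum_prod {X : ι → Ω → ℕ} (hX : iIndepFun X P)
    (a : ℝ) :
    P {ω | ∑ i, (X i ω : ℝ) < a} ≤
      ∑ m ∈ (Fintype.piFinset fun _ : ι => range ⌈a⌉₊).filter (fun m => ∑ i, (m i : ℝ) < a),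
        ∏ i, P {ω | X i ω = m i} := by
  set T := (Fintype.piFinset fun _ : ι => range ⌈a⌉₊).filter (fun m => ∑ i, (m i : ℝ) < a)
  have hcover : {ω | ∑ i, (X i ω : ℝ) < a} ⊆ ⋃ m ∈ T, ⋂ i, X i ⁻¹' {m i} := by
    intro ω hω
    refine Set.mem_biUnion (x := fun i => X i ω) ?_ (Set.mem_iInter.2 fun i => rfl)
    refine mem_filter.2 ⟨Fintype.mem_piFinset.2 fun i => mem_range.2 (Nat.lt_ceil.2 ?_), hω⟩
    exact (single_le_sum (fun j _ => (X j ω).cast_nonneg) (mem_univ i)).trans_lt hω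
  calc P {ω | ∑ i, (X i ω : ℝ) < a} ≤ P (⋃ m ∈ T, ⋂ i, X i ⁻¹' {m i}) := measure_mono hcover
    _ ≤ ∑ m ∈ T, P (⋂ i, X i ⁻¹' {m i}) := measure_biUnion_finset_le _ _
    _ = ∑ m ∈ T, ∏ i, P {ω | X i ω = m i} := sum_congr rfl fun m _ =>
      hX.meas_iInter fun i => ⟨{m i}, measurableSet_singleton _, rfl⟩

theorem sum_filter_sum_lt_prod_le_exp_mul_pow (t : Finset ℕ) {g : ℕ → ℝ} (hg : ∀ j, 0 ≤ g j)
    {θ : ℝ} (hθ : 0 ≤ θ) (a : ℝ) :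
    ∑ m ∈ (Fintype.piFinset fun _ : ι => t).filter (fun m => ∑ i, (m i : ℝ) < a), ∏ i, g (m i)
      ≤ exp (θ * a) * (∑ j ∈ t, g j * exp (-θ) ^ j) ^ Fintype.card ι := by
  have htilt : ∀ m : ι → ℕ, ∑ i, (m i : ℝ) < a →
      ∏ i, g (m i) ≤ exp (θ * a) * ∏ i, (g (m i) * exp (-θ) ^ m i) := by
    intro m hm
    have hexp : 1 ≤ exp (θ * a) * exp (-θ) ^ ∑ i, m i := by
      rw [← exp_nat_mul, ← exp_add, Nat.cast_sum]
      exact one_le_exp (by nlinarith)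
    rw [prod_mul_distrib, prod_pow_eq_pow_sum, mul_left_comm]
    exact le_mul_of_one_le_right (prod_nonneg fun i _ => hg _) hexp
  calc _ ≤ ∑ m ∈ (Fintype.piFinset fun _ : ι => t).filter (fun m => ∑ i, (m i : ℝ) < a),
        exp (θ * a) * ∏ i, (g (m i) * exp (-θ) ^ m i) :=
        sum_le_sum fun m hm => htilt m (mem_filter.1 hm).2
    _ ≤ ∑ m ∈ Fintype.piFinset fun _ : ι => t, exp (θ * a) * ∏ i, (g (m i) * exp (-θ) ^ m i) :=
        sum_le_sum_of_subset_of_nonneg (filter_subset _ _) fun m _ _ =>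
          mul_nonneg (exp_nonneg _) (prod_nonneg fun i _ => mul_nonneg (hg _) (by positivity))
    _ = _ := by rw [← card_univ, ← prod_const, prod_univ_sum, mul_sum]

theorem sum_range_geometric_mul_pow_le {p r : ℝ} (hp0 : 0 < p) (hp1 : p ≤ 1) (hr0 : 0 ≤ r)
    (hr1 : r ≤ 1) (K : ℕ) :
    ∑ j ∈ range K, (1 - p) ^ j * p * r ^ j ≤ p / (1 - (1 - p) * r) := by
  have hq0 : 0 ≤ (1 - p) * r := mul_nonneg (sub_nonneg.2 hp1) hr0
  have hq1 : (1 - p) * r < 1 := by nlinarith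
  calc ∑ j ∈ range K, (1 - p) ^ j * p * r ^ j = p * ∑ j ∈ Ico 0 K, ((1 - p) * r) ^ j := by
        rw [mul_sum, range_eq_Ico]
        exact sum_congr rfl fun j _ => by rw [mul_pow]; ring
    _ ≤ p * (((1 - p) * r) ^ 0 / (1 - (1 - p) * r)) :=
        mul_le_mul_of_nonneg_left (geom_sum_Ico_le_of_lt_one hq0 hq1) hp0.le
    _ = p / (1 - (1 - p) * r) := by rw [pow_zero, mul_one_div]

theorem measure_sum_lt_le_exp_mul_pow_of_geometric {X : ι → Ω → ℕ} (hX : iIndepFun X P) {p : ℝ}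
    (hp0 : 0 < p) (hp1 : p ≤ 1)
    (hdist : ∀ i m, P {ω | X i ω = m} = ENNReal.ofReal ((1 - p) ^ m * p))
    {θ : ℝ} (hθ : 0 ≤ θ) (a : ℝ) :
    P {ω | ∑ i, (X i ω : ℝ) < a} ≤
      ENNReal.ofReal (exp (θ * a) * (p / (1 - (1 - p) * exp (-θ))) ^ Fintype.card ι) := by
  have hg : ∀ j : ℕ, 0 ≤ (1 - p) ^ j * p := fun j => by
    have := sub_nonneg.2 hp1
    positivity
  set T := (Fintype.piFinset fun _ : ι => range ⌈a⌉₊).filter (fun m => ∑ i, (m i : ℝ) < a)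
  calc P {ω | ∑ i, (X i ω : ℝ) < a} ≤ ∑ m ∈ T, ∏ i, ENNReal.ofReal ((1 - p) ^ m i * p) := by
        simpa only [hdist] using hX.measure_sum_lt_le_sum_prod a
    _ = ENNReal.ofReal (∑ m ∈ T, ∏ i, ((1 - p) ^ m i * p)) := by
        rw [ENNReal.ofReal_sum_of_nonneg fun m _ => prod_nonneg fun i _ => hg _]
        exact sum_congr rfl fun m _ => (ENNReal.ofReal_prod_of_nonneg fun i _ => hg _).symm
    _ ≤ _ := by
        refine ENNReal.ofReal_le_ofReal ((sum_filter_sum_lt_prod_le_exp_mul_pow _ hg hθ a).trans ?_)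
        gcongr
        exact sum_range_geometric_mul_pow_le hp0 hp1 (exp_nonneg _)
          (exp_le_one_iff.2 (neg_nonpos.2 hθ)) _

end

theorem geometric_chernoff_lower_small_mean_general {Ω : Type*} [MeasurableSpace Ω]
    (P : Measure Ω) (n : ℕ) (hn : 0 < n)
    (X : Fin n → Ω → ℕ) (p : ℝ) (hp : p ∈ Set.Ioo (0 : ℝ) 1)
    (hindep : iIndepFun X P)
    (hdist : ∀ i m, P {ω | X i ω = m} = ENNReal.ofReal ((1 - p) ^ m * p))
    (μ : ℝ) (hμ : μ = (1 - p) / p) (hμ0 : 0 < μ) (hμ1 : μ ≤ 1)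
    (δ : ℝ) (hδ0 : 0 < δ) (hδ1 : δ < 1) :
    P {ω | (∑ i, (X i ω : ℝ)) / n < (1 - δ) * μ}
      ≤ ENNReal.ofReal
          (Real.exp (-((n * δ ^ 2 * μ) / (6 * (1 + μ) ^ 2))
            * (3 - 2 * δ * μ / (1 + μ)))) := by
  obtain ⟨hp0, hp1⟩ := hp
  have hexponent := geometric_lower_tail_exponent_le hδ0 hδ1 hμ0 hμ1
  have hpμ : p = 1 / (1 + μ) := by rw [hμ]; field_simp; ring
  set v := δ * μ / (1 + μ) with hv
  have hvδ : v ≤ δ := by rw [hv, div_le_iff₀ (by positivity)]; nlinarith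
  have hv1 : 0 < 1 - v := by linarith
  set θ := log ((1 - v) / (1 - δ)) with hθdef
  have hθ : 0 ≤ θ := log_nonneg ((one_le_div (by linarith)).2 (by linarith))
  have hmgf : p / (1 - (1 - p) * exp (-θ)) = 1 - v := by
    rw [exp_neg, exp_log (div_pos hv1 (by linarith)), hpμ, hv]
    have hne : 1 + μ - μ * δ ≠ 0 := by nlinarith
    field_simp [(sub_pos.2 hδ1).ne', hne]
    ring
  have hmean : {ω | (∑ i, (X i ω : ℝ)) / n < (1 - δ) * μ} ⊆
      {ω | ∑ i, (X i ω : ℝ) < n * ((1 - δ) * μ)} :=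
    fun ω hω => (div_lt_iff₀' (Nat.cast_pos (α := ℝ).2 hn)).1 hω
  calc P {ω | (∑ i, (X i ω : ℝ)) / n < (1 - δ) * μ}
      ≤ ENNReal.ofReal (exp (θ * (n * ((1 - δ) * μ))) * (1 - v) ^ n) := by
        simpa only [hmgf, Fintype.card_fin] using (measure_mono hmean).trans
          (measure_sum_lt_le_exp_mul_pow_of_geometric hindep hp0 hp1.le hdist hθ _)
    _ = ENNReal.ofReal (exp (n *
          (-((1 - δ) * μ) * log (1 - δ) + (1 + (1 - δ) * μ) * log (1 - v)))) := by
        rw [← rpow_natCast, rpow_def_of_pos hv1, ← exp_add, hθdef,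
          log_div hv1.ne' (sub_pos.2 hδ1).ne']
        congr 2
        ring
    _ ≤ _ := ENNReal.ofReal_le_ofReal <| exp_le_exp.2 <|
        (mul_le_mul_of_nonneg_left hexponent n.cast_nonneg).trans_eq (by ring)

/-- Multiplicative Chernoff bound for geometric random variables (lower tail, small
mean): if `X₁,…,Xₙ` are i.i.d. geometric on `{0,1,2,...}` with mean `μ = (1−p)/p ≤ 1`,
then for any `δ ∈ (0,1)`,
`P((1/n)∑Xᵢ < (1−δ)μ) ≤ exp(−(nδ²μ/(6(1+μ)²))(3 − 2δμ/(1+μ)))`. -/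
theorem geometric_chernoff_lower_small_mean {Ω : Type*} [MeasurableSpace Ω]
    (P : Measure Ω) [IsProbabilityMeasure P] (n : ℕ) (hn : 0 < n)
    (X : Fin n → Ω → ℕ) (p : ℝ) (hp : p ∈ Set.Ioo (0 : ℝ) 1)
    (hindep : iIndepFun X P)
    (hdist : ∀ i m, P {ω | X i ω = m} = ENNReal.ofReal ((1 - p) ^ m * p))
    (μ : ℝ) (hμ : μ = (1 - p) / p) (hμ0 : 0 < μ) (hμ1 : μ ≤ 1)
    (δ : ℝ) (hδ0 : 0 < δ) (hδ1 : δ < 1) :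
    P {ω | (∑ i, (X i ω : ℝ)) / n < (1 - δ) * μ}
      ≤ ENNReal.ofReal
          (Real.exp (-((n * δ ^ 2 * μ) / (6 * (1 + μ) ^ 2))
            * (3 - 2 * δ * μ / (1 + μ)))) :=
  geometric_chernoff_lower_small_mean_general P n hn X p hp hindep hdist μ hμ hμ0 hμ1 δ hδ0 hδ1
end

section
/- Unconstrained optimal assortment membership criterion: for the unconstrained MNL assortment problem (𝒮 = all subsets of {1,...,N}) with v_i > 0 and r_i ≥ 0, an optimal assortment S* satisfies: i ∈ S* if and only if r_i ≥ R(S*, v). -/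
/-- Membership criterion for the unconstrained optimal MNL assortment: if `S*` maximizes
`R(S,v) = (∑_{i∈S} rᵢ vᵢ)/(1 + ∑_{j∈S} vⱼ)` over all subsets of the ground set
`{1,…,N}` (with `vᵢ > 0`, `rᵢ ≥ 0`, and ties broken so that `S*` contains every product
with `rᵢ ≥ R(S*,v)`), then `i ∈ S*` if and only if `rᵢ ≥ R(S*,v)`. -/
theorem mnl_unconstrained_membership (N : ℕ) (r v : ℕ → ℝ)
    (hr : ∀ i, 0 ≤ r i) (hv : ∀ i, 0 < v i)
    (R : Finset ℕ → ℝ)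
    (hR : ∀ S, R S = (∑ i ∈ S, r i * v i) / (1 + ∑ j ∈ S, v j))
    (Sstar : Finset ℕ) (hSsub : Sstar ⊆ Finset.Icc 1 N)
    (hopt : ∀ S ⊆ Finset.Icc 1 N, R S ≤ R Sstar)
    (htie : ∀ i ∈ Finset.Icc 1 N, R Sstar ≤ r i → i ∈ Sstar) :
    ∀ i ∈ Finset.Icc 1 N, (i ∈ Sstar ↔ R Sstar ≤ r i) := by
  intro i hi
  constructor
  · intro hmem
    by_contra h
    push_neg at h
    set S' := Sstar.erase i with hS'
    have hS'sub : S' ⊆ Finset.Icc 1 N := (Finset.erase_subset _ _).trans hSsub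
    have hopt' := hopt S' hS'sub
    have hA : ∑ j ∈ Sstar, r j * v j = (∑ j ∈ S', r j * v j) + r i * v i := by
      rw [hS', Finset.sum_erase_add _ _ hmem]
    have hB : ∑ j ∈ Sstar, v j = (∑ j ∈ S', v j) + v i := by
      rw [hS', Finset.sum_erase_add _ _ hmem]
    set A := ∑ j ∈ S', r j * v j
    set B := ∑ j ∈ S', v j
    have hBpos : 0 < 1 + B := by
      have : 0 ≤ B := Finset.sum_nonneg fun j _ => (hv j).le
      linarith
    have hDpos : 0 < 1 + B + v i := by have := hv i; linarith
    rw [hR, hR, hA, hB] at hopt'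
    rw [hR, hA, hB] at h
    rw [div_le_div_iff₀ hBpos (by linarith : (0:ℝ) < 1 + (B + v i))] at hopt'
    rw [lt_div_iff₀ (by linarith : (0:ℝ) < 1 + (B + v i))] at h
    nlinarith [hv i]
  · exact htie i hi
end
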